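/- For 2 < 2s < n+2, the numbers |L_{n,s}| of generally admissible paths of size (n,s) crossing x=0 satisfy the recursion |L_{n,s}| = |L_{n-1,s}| + |L_{n-1,s-1}|. -/

import Mathlib

open Finset
open scoped Classical
noncomputable section

/-- Position (x-coordinate) after `t` steps of the path `p`, where `true` encodes a
right step `(x,y) ↦ (x+1,y+1)` and `false` a left step `(x,y) ↦ (x-1,y+1)`. -/
def pathPos {m : ℕ} (p : Fin m → Bool) (t : ℕ) : ℤ :=
  ∑ j : Fin m, if (j : ℕ) < t then (if p j then (1 : ℤ) else -1) else 0

/-- Generally admissible paths of size `(n,s)`: `n+2` diagonal steps starting at `(0,0)`,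
the 0-th and the last step going right, with exactly `s` left steps
(hence ending at `(n+2-2s, n+2)`). -/
def admissible (n s : ℕ) : Finset (Fin (n + 2) → Bool) :=
  Finset.univ.filter (fun p =>
    (∀ j : Fin (n + 2), (j : ℕ) = 0 → p j = true) ∧
    (∀ j : Fin (n + 2), (j : ℕ) = n + 1 → p j = true) ∧
    (Finset.univ.filter (fun j => p j = false)).card = s)

/-- The path crosses the line `x = 0`, i.e. reaches x-coordinate `-1` at some time. -/
def crossesLeft {m : ℕ} (p : Fin m → Bool) : Prop :=
  ∃ t ∈ Finset.range (m + 1), pathPos p t = -1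

/-- A path of size `(n,s)` crosses the line `x = n+2-2s`,
i.e. reaches x-coordinate `n+3-2s` at some time. -/
def crossesRight (n s : ℕ) (p : Fin (n + 2) → Bool) : Prop :=
  ∃ t ∈ Finset.range (n + 3), pathPos p t = (n : ℤ) + 3 - 2 * s

/-- `L n s`: the number of generally admissible paths of size `(n,s)`
crossing the line `x = 0`. -/
def L (n s : ℕ) : ℕ := ((admissible n s).filter (fun p => crossesLeft p)).card

/-- Constrained lattice paths: `n+2` diagonal steps from `(0,0)` to `(n+2-2s, n+2)`,
staying inside the strip `0 ≤ x ≤ n+2-2s`.  (`n` is allowed to be a negative integer,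
with the convention that there are `max (n+2) 0` steps.) -/
def aPaths (n : ℤ) (s : ℕ) : Finset (Fin (n + 2).toNat → Bool) :=
  Finset.univ.filter (fun p =>
    pathPos p (n + 2).toNat = n + 2 - 2 * s ∧
    ∀ t ∈ Finset.range ((n + 2).toNat + 1),
      0 ≤ pathPos p t ∧ pathPos p t ≤ n + 2 - 2 * s)

/-- `a n s`: the number of lattice paths from `(0,0)` to `(n+2-2s, n+2)` with steps
`(x,y) ↦ (x±1, y+1)` staying inside the strip `0 ≤ x ≤ n+2-2s`. -/
def a (n : ℤ) (s : ℕ) : ℕ := (aPaths n s).card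

/-- Binomial coefficient `C(n,k)` with integer lower index, zero when `k < 0`. -/
def binom (n : ℕ) (k : ℤ) : ℕ := if k < 0 then 0 else n.choose k.toNat

/-- `b W H`: the number of lattice paths from `(0,0)` to `(W,H)` with steps
`(x,y) ↦ (x±1,y+1)` staying in the strip `0 ≤ x ≤ W`, whose first and last steps go
right, and whose intermediate steps come in consecutive same-direction pairs
`(1,2), (3,4), …, (H-3,H-2)`. -/
def bPaths (W H : ℕ) : Finset (Fin H → Bool) :=
  Finset.univ.filter (fun p =>
    (∀ j : Fin H, (j : ℕ) = 0 → p j = true) ∧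
    (∀ j : Fin H, (j : ℕ) = H - 1 → p j = true) ∧
    (∀ j1 j2 : Fin H, (j1 : ℕ) % 2 = 1 → (j2 : ℕ) = (j1 : ℕ) + 1 →
      (j1 : ℕ) + 1 ≤ H - 2 → p j1 = p j2) ∧
    pathPos p H = (W : ℤ) ∧
    ∀ t ∈ Finset.range (H + 1), 0 ≤ pathPos p t ∧ pathPos p t ≤ (W : ℤ))

def b (W H : ℕ) : ℕ := (bPaths W H).card

lemma pathPos_zero {m : ℕ} (p : Fin m → Bool) : pathPos p 0 = 0 := by
  simp [pathPos]

lemma pathPos_succ {m : ℕ} (p : Fin m → Bool) {t : ℕ} (ht : t < m) :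
    pathPos p (t + 1) = pathPos p t + (if p ⟨t, ht⟩ then 1 else -1) := by
  unfold pathPos
  have key : ∀ j : Fin m,
      (if (j : ℕ) < t + 1 then (if p j then (1 : ℤ) else -1) else 0)
      = (if (j : ℕ) < t then (if p j then (1 : ℤ) else -1) else 0)
        + (if j = ⟨t, ht⟩ then (if p j then (1 : ℤ) else -1) else 0) := by
    intro j
    by_cases h1 : (j : ℕ) < t
    · have h2 : (j : ℕ) < t + 1 := by omega
      have hne : j ≠ ⟨t, ht⟩ := by simp only [ne_eq, Fin.ext_iff]; omega
      simp [h1, h2, hne]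
    · by_cases h2 : (j : ℕ) = t
      · have he : j = ⟨t, ht⟩ := by simp [Fin.ext_iff, h2]
        simp [h1, h2, he]
      · have h3 : ¬ (j : ℕ) < t + 1 := by omega
        have hne : j ≠ ⟨t, ht⟩ := by simp only [ne_eq, Fin.ext_iff]; omega
        simp [h1, h3, hne]
  rw [Finset.sum_congr rfl fun j _ => key j, Finset.sum_add_distrib,
    Finset.sum_ite_eq' Finset.univ (⟨t, ht⟩ : Fin m) (fun j => if p j then (1:ℤ) else -1)]
  simp

lemma pathPos_congr {m m' : ℕ} (p : Fin m → Bool) (q : Fin m' → Bool) (t : ℕ)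
    (htm : t ≤ m) (htm' : t ≤ m')
    (h : ∀ j (hj : j < t), p ⟨j, by omega⟩ = q ⟨j, by omega⟩) :
    pathPos p t = pathPos q t := by
  induction t with
  | zero => simp [pathPos_zero]
  | succ t ih =>
    rw [pathPos_succ p (by omega), pathPos_succ q (by omega),
      ih (by omega) (by omega) (fun j hj => h j (by omega)), h t (by omega)]

lemma pathPos_total {m : ℕ} (p : Fin m → Bool) :
    pathPos p m = (m : ℤ) - 2 * ((Finset.univ.filter (fun j => p j = false)).card : ℤ) := by
  unfold pathPos
  have key : ∀ j : Fin m, (if (j:ℕ) < m then (if p j then (1:ℤ) else -1) else 0)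
      = 1 - 2 * (if p j = false then 1 else 0) := by
    intro j; cases hj : p j <;> simp [j.isLt, hj]
  rw [Finset.sum_congr rfl fun j _ => key j, Finset.sum_sub_distrib, ← Finset.mul_sum]
  simp [Finset.sum_boole]

lemma card_false_iff {m : ℕ} (p : Fin m → Bool) (s : ℕ) :
    (Finset.univ.filter (fun j => p j = false)).card = s ↔ pathPos p m = (m : ℤ) - 2 * s := by
  rw [pathPos_total]
  constructor <;> intro h <;> omega

def Phi (k : ℕ) (p : Fin (k + 5) → Bool) : Fin (k + 4) → Bool :=
  fun j => if h : (j : ℕ) < k + 3 then p ⟨j, by omega⟩ else true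

def Psi (k : ℕ) (b : Bool) (q : Fin (k + 4) → Bool) : Fin (k + 5) → Bool :=
  fun j => if h : (j : ℕ) < k + 3 then q ⟨j, by omega⟩ else if (j : ℕ) = k + 3 then b else true

lemma aux (k s s' : ℕ) (b : Bool) (hs2 : 1 ≤ s) (hsk : 2 * s ≤ k + 4)
    (hb : (s' : ℤ) = (s : ℤ) - (if b then 0 else 1)) :
    (((admissible (k + 3) s).filter (fun p => crossesLeft p)).filter
        (fun p => p ⟨k + 3, by omega⟩ = b)).card = L (k + 2) s' := by
  rw [L]
  apply Finset.card_nbij' (Phi k) (Psi k b)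
  · -- forward maps-to
    intro p hp
    simp only [Finset.mem_coe, Finset.mem_filter, Finset.mem_univ, true_and] at hp ⊢
    simp only [admissible, crossesLeft, Finset.mem_filter, Finset.mem_univ, true_and] at hp ⊢
    obtain ⟨⟨⟨h0, hlast, hcard⟩, t, ht, hcross⟩, hpen⟩ := hp
    have hlast' : p ⟨k + 4, by omega⟩ = true := hlast _ rfl
    have hfin : pathPos p (k + 5) = ((k : ℤ) + 5) - 2 * s := by
      have h := (card_false_iff p s).1 hcard
      push_cast at h
      convert h using 2 <;> omega
    have e5 : pathPos p (k + 5) = pathPos p (k + 4) + 1 := by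
      have h := pathPos_succ p (t := k + 4) (by omega)
      rw [hlast'] at h
      simpa [show k + 4 + 1 = k + 5 by omega] using h
    have e4 : pathPos p (k + 4) = pathPos p (k + 3) + (if b then 1 else -1) := by
      have h := pathPos_succ p (t := k + 3) (by omega)
      rw [hpen] at h
      simpa [show k + 3 + 1 = k + 4 by omega] using h
    have h4 : pathPos p (k + 4) = ((k : ℤ) + 4) - 2 * s := by omega
    have hagree : ∀ u, u ≤ k + 3 → pathPos (Phi k p) u = pathPos p u := by
      intro u hu
      apply pathPos_congr _ _ u (by omega) (by omega)
      intro j hj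
      simp only [Phi]
      rw [dif_pos (by omega)]
    have hp3 : (Phi k p) ⟨k + 3, by omega⟩ = true := by simp [Phi]
    refine ⟨⟨?_, ?_, ?_⟩, ?_⟩
    · intro j hj
      simp only [Phi]
      rw [dif_pos (by omega : (j : ℕ) < k + 3)]
      exact h0 _ (by simpa using hj)
    · intro j hj
      simp only [Phi]
      rw [dif_neg (by omega : ¬ (j : ℕ) < k + 3)]
    · rw [card_false_iff]
      have ePhi : pathPos (Phi k p) (k + 4) = pathPos p (k + 3) + 1 := by
        have h := pathPos_succ (Phi k p) (t := k + 3) (by omega)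
        rw [hp3, hagree (k + 3) le_rfl] at h
        simpa [show k + 3 + 1 = k + 4 by omega] using h
      show pathPos (Phi k p) (k + 4) = ((k + 4 : ℕ) : ℤ) - 2 * s'
      rw [ePhi]
      push_cast
      rcases b with _ | _ <;> norm_num at hb e4 <;> omega
    · simp only [Finset.mem_range] at ht
      have htle : t ≤ k + 3 := by
        by_contra hgt
        rcases (by omega : t = k + 4 ∨ t = k + 5) with rfl | rfl
        · rw [h4] at hcross; omega
        · rw [hfin] at hcross; omega
      exact ⟨t, Finset.mem_range.2 (by omega), by rw [hagree t htle]; exact hcross⟩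
  · -- backward maps-to
    intro q hq
    simp only [Finset.mem_coe, Finset.mem_filter, Finset.mem_univ, true_and] at hq ⊢
    simp only [admissible, crossesLeft, Finset.mem_filter, Finset.mem_univ, true_and] at hq ⊢
    obtain ⟨⟨h0, hlast, hcard⟩, t, ht, hcross⟩ := hq
    have hlast' : q ⟨k + 3, by omega⟩ = true := hlast _ rfl
    have hfin : pathPos q (k + 4) = ((k : ℤ) + 4) - 2 * s' := by
      have h := (card_false_iff q s').1 hcard
      push_cast at h
      convert h using 2 <;> omega
    have e4 : pathPos q (k + 4) = pathPos q (k + 3) + 1 := by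
      have h := pathPos_succ q (t := k + 3) (by omega)
      rw [hlast'] at h
      simpa [show k + 3 + 1 = k + 4 by omega] using h
    have hagree : ∀ u, u ≤ k + 3 → pathPos (Psi k b q) u = pathPos q u := by
      intro u hu
      apply pathPos_congr _ _ u (by omega) (by omega)
      intro j hj
      simp only [Psi]
      rw [dif_pos (by omega)]
    have hpsi3 : (Psi k b q) ⟨k + 3, by omega⟩ = b := by simp [Psi]
    have hpsi4 : (Psi k b q) ⟨k + 4, by omega⟩ = true := by simp [Psi]
    refine ⟨⟨⟨?_, ?_, ?_⟩, ?_⟩, hpsi3⟩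
    · intro j hj
      simp only [Psi]
      rw [dif_pos (by omega : (j : ℕ) < k + 3)]
      exact h0 _ (by simpa using hj)
    · intro j hj
      simp only [Psi]
      rw [dif_neg (by omega), if_neg (by omega)]
    · rw [card_false_iff]
      have f4 : pathPos (Psi k b q) (k + 4)
          = pathPos q (k + 3) + (if b then 1 else -1) := by
        have h := pathPos_succ (Psi k b q) (t := k + 3) (by omega)
        rw [hpsi3, hagree (k + 3) le_rfl] at h
        simpa [show k + 3 + 1 = k + 4 by omega] using h
      have f5 : pathPos (Psi k b q) (k + 5) = pathPos (Psi k b q) (k + 4) + 1 := by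
        have h := pathPos_succ (Psi k b q) (t := k + 4) (by omega)
        rw [hpsi4] at h
        simpa [show k + 4 + 1 = k + 5 by omega] using h
      show pathPos (Psi k b q) (k + 5) = ((k + 5 : ℕ) : ℤ) - 2 * s
      rw [f5, f4]
      push_cast
      rcases b with _ | _ <;> norm_num at hb ⊢ <;> omega
    · simp only [Finset.mem_range] at ht
      have htle : t ≤ k + 3 := by
        by_contra hgt
        have : t = k + 4 := by omega
        subst this
        rw [hfin] at hcross
        rcases b with _ | _ <;> norm_num at hb <;> omega
      exact ⟨t, Finset.mem_range.2 (by omega), by rw [hagree t htle]; exact hcross⟩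
  · -- left inverse
    intro p hp
    simp only [Finset.mem_coe, admissible, Finset.mem_filter, Finset.mem_univ, true_and] at hp
    obtain ⟨⟨⟨h0, hlast, hcard⟩, hcross⟩, hpen⟩ := hp
    funext j
    by_cases h : (j : ℕ) < k + 3
    · simp only [Psi, Phi]
      rw [dif_pos h, dif_pos h]
    · by_cases h2 : (j : ℕ) = k + 3
      · simp only [Psi]
        rw [dif_neg (by omega), if_pos h2, ← hpen]
        congr 1
        exact Fin.ext h2.symm
      · have h3 : (j : ℕ) = k + 4 := by omega
        simp only [Psi]
        rw [dif_neg (by omega), if_neg (by omega)]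
        exact (hlast j (by omega)).symm
  · -- right inverse
    intro q hq
    simp only [Finset.mem_coe, admissible, Finset.mem_filter, Finset.mem_univ, true_and] at hq
    obtain ⟨⟨h0, hlast, hcard⟩, hcross⟩ := hq
    funext j
    by_cases h : (j : ℕ) < k + 3
    · simp only [Phi, Psi]
      rw [dif_pos h, dif_pos h]
    · have h2 : (j : ℕ) = k + 3 := by omega
      simp only [Phi]
      rw [dif_neg (by omega)]
      exact (hlast j (by omega)).symm

/-- for `2 < 2s < n+2`, the recursion `|L_{n,s}| = |L_{n-1,s}| + |L_{n-1,s-1}|`. -/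
theorem stmt4 (n s : ℕ) (h1 : 2 < 2 * s) (h2 : 2 * s < n + 2) :
    L n s = L (n - 1) s + L (n - 1) (s - 1) := by
  obtain ⟨k, rfl⟩ : ∃ k, n = k + 3 := ⟨n - 3, by omega⟩
  have hs1 : 1 ≤ s := by omega
  have hsk : 2 * s ≤ k + 4 := by omega
  have e : k + 3 - 1 = k + 2 := by omega
  rw [e, ← aux k s s true hs1 hsk (by simp),
    ← aux k s (s - 1) false hs1 hsk (by push_cast [Nat.cast_sub hs1]; simp), L]
  have key : ∀ (idx : Fin (k + 5)) (S : Finset (Fin (k + 5) → Bool)),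
      S.card = (S.filter (fun p => p idx = true)).card
        + (S.filter (fun p => p idx = false)).card := by
    intro idx S
    rw [← Finset.card_filter_add_card_filter_not (p := fun p => p idx = true)]
    congr 1
    exact congr_arg Finset.card (Finset.filter_congr (fun p _ => by simp))
  exact key _ _
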